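/- Let X be a Banach space, let n ≥ 1, ε > 0, and let x, y be in the unit sphere S(X). If the distance from y to conv_n(l⁺(x, ε/2)) is strictly less than ε/2, then y ∈ conv_n(l⁺(x, ε)). In particular, if Daug_n(X, ε/2) < ε/2, then every point of S(X) lies in conv_n(l⁺(x, ε)) for every x ∈ S(X). -/
import Mathlib


/-- For `x` in the unit sphere of `X` and `ε > 0`,
`l⁺(x, ε) = {y : ‖y‖ ≤ 1 + ε and ‖x + y‖ > 2 - ε}`. -/
def lPlus {X : Type*} [NormedAddCommGroup X] (x : X) (ε : ℝ) : Set X :=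
  {y : X | ‖y‖ ≤ 1 + ε ∧ 2 - ε < ‖x + y‖}

/-- `convN n A` is the set of all convex combinations of `n`-point collections of
elements of `A`. -/
def convN {X : Type*} [AddCommGroup X] [Module ℝ X] (n : ℕ) (A : Set X) : Set X :=
  {y : X | ∃ (a : Fin n → X) (lam : Fin n → ℝ), (∀ i, a i ∈ A) ∧ (∀ i, 0 ≤ lam i) ∧
    ∑ i, lam i = 1 ∧ y = ∑ i, lam i • a i}

/-- `Daug_n(X, ε) = sup_{x, y ∈ S(X)} dist (y, conv_n (l⁺(x, ε)))`. -/
noncomputable def daugN (X : Type*) [NormedAddCommGroup X] [NormedSpace ℝ X]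
    (n : ℕ) (ε : ℝ) : ℝ :=
  sSup {d : ℝ | ∃ x y : X, ‖x‖ = 1 ∧ ‖y‖ = 1 ∧
    d = Metric.infDist y (convN n (lPlus x ε))}

/-- `x` itself belongs to `conv_n (l⁺(x, δ))` for `δ > 0`, `n ≥ 1`. -/
lemma self_mem_convN_lPlus {X : Type*} [NormedAddCommGroup X] [NormedSpace ℝ X]
    (n : ℕ) (hn : 1 ≤ n) (x : X) (hx : ‖x‖ = 1) (δ : ℝ) (hδ : 0 < δ) :
    x ∈ convN n (lPlus x δ) := by
  have hn0 : (n : ℝ) ≠ 0 := Nat.cast_ne_zero.mpr (by omega)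
  refine ⟨fun _ => x, fun _ => (n : ℝ)⁻¹, fun i => ⟨?_, ?_⟩, fun i => by positivity,
    ?_, ?_⟩
  · rw [hx]; linarith
  · have : ‖x + x‖ = 2 := by
      rw [← two_smul ℝ x, norm_smul, hx]; simp
    rw [this]; linarith
  · simp [Finset.sum_const, hn0]
  · rw [← Finset.sum_smul]
    simp [Finset.sum_const, hn0]

/-- If `y ∈ S(X)` is at distance `< ε/2` from `conv_n (l⁺(x, ε/2))` for `x ∈ S(X)`,
then `y ∈ conv_n (l⁺(x, ε))`.  In particular, if `Daug_n(X, ε/2) < ε/2`, then every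
point of the unit sphere lies in `conv_n (l⁺(x, ε))` for every `x` in the unit
sphere. -/
theorem mem_convN_lPlus_of_infDist_lt
    {X : Type*} [NormedAddCommGroup X] [NormedSpace ℝ X] [CompleteSpace X]
    (n : ℕ) (hn : 1 ≤ n) (ε : ℝ) (hε : 0 < ε) :
    (∀ x y : X, ‖x‖ = 1 → ‖y‖ = 1 →
        Metric.infDist y (convN n (lPlus x (ε / 2))) < ε / 2 →
        y ∈ convN n (lPlus x ε)) ∧
    (daugN X n (ε / 2) < ε / 2 →
        ∀ x y : X, ‖x‖ = 1 → ‖y‖ = 1 → y ∈ convN n (lPlus x ε)) := by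
  have key : ∀ x y : X, ‖x‖ = 1 → ‖y‖ = 1 →
      Metric.infDist y (convN n (lPlus x (ε / 2))) < ε / 2 →
      y ∈ convN n (lPlus x ε) := by
    intro x y hx hy hd
    have hne : (convN n (lPlus x (ε / 2))).Nonempty :=
      ⟨x, self_mem_convN_lPlus n hn x hx (ε / 2) (by linarith)⟩
    obtain ⟨z, hz, hdz⟩ := (Metric.infDist_lt_iff hne).mp hd
    obtain ⟨a, lam, ha, hlam, hsum, hz'⟩ := hz
    have hyz : ‖y - z‖ < ε / 2 := by rwa [← dist_eq_norm]
    refine ⟨fun i => a i + (y - z), lam, fun i => ⟨?_, ?_⟩, hlam, hsum, ?_⟩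
    · calc ‖a i + (y - z)‖ ≤ ‖a i‖ + ‖y - z‖ := norm_add_le _ _
        _ ≤ (1 + ε / 2) + ε / 2 := by
            have := (ha i).1
            linarith
        _ = 1 + ε := by ring
    · have h1 := (ha i).2
      have h2 : ‖x + a i‖ ≤ ‖x + (a i + (y - z))‖ + ‖y - z‖ := by
        calc ‖x + a i‖ = ‖(x + (a i + (y - z))) + -(y - z)‖ := by congr 1; abel
          _ ≤ ‖x + (a i + (y - z))‖ + ‖-(y - z)‖ := norm_add_le _ _
          _ = ‖x + (a i + (y - z))‖ + ‖y - z‖ := by rw [norm_neg]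
      linarith
    · have : ∑ i, lam i • (a i + (y - z)) =
          (∑ i, lam i • a i) + (∑ i, lam i) • (y - z) := by
        rw [Finset.sum_smul]
        rw [← Finset.sum_add_distrib]
        congr 1; ext i; rw [smul_add]
      rw [this, hsum, one_smul, ← hz']
      abel
  refine ⟨key, fun hD x y hx hy => key x y hx hy ?_⟩
  have hbdd : BddAbove {d : ℝ | ∃ x y : X, ‖x‖ = 1 ∧ ‖y‖ = 1 ∧
      d = Metric.infDist y (convN n (lPlus x (ε / 2)))} := by
    refine ⟨2 + ε, ?_⟩
    rintro d ⟨x', y', hx', hy', rfl⟩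
    have h3 : Metric.infDist y' (convN n (lPlus x' (ε / 2))) ≤ dist y' x' :=
      Metric.infDist_le_dist_of_mem (self_mem_convN_lPlus n hn x' hx' (ε / 2) (by linarith))
    have h4 : dist y' x' ≤ 2 + ε := by
      rw [dist_eq_norm]
      have := norm_sub_le y' x'
      rw [hx', hy'] at this
      linarith
    linarith
  exact lt_of_le_of_lt (le_csSup hbdd ⟨x, y, hx, hy, rfl⟩) hD
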